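/- Let A be a finite dimensional k-algebra and α : A ⊗ A → A* a Hochschild 2-cocycle. If the Hochschild extension T(A,α) is a symmetric algebra, then there exist c ∈ Z(A) ∩ U(A) and h ∈ A* such that α(a⊗b)(c) − α(b⊗a)(c) + h(ab − ba) = 0 for all a,b ∈ A. -/
import Mathlib


namespace HochschildExtension

variable (k : Type*) [Field k] (A : Type*) [Ring A] [Algebra k A]

/-- The underlying vector space `A ⊕ A*` of the Hochschild extension `T(A,α)`. -/
abbrev Ext : Type _ := A × Module.Dual k A

/-- The Hochschild 2-cocycle condition for `α : A ⊗ A → A*`, written pointwise using the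
dual bimodule structure `(c·f·a)(b) = f(abc)`, i.e. `(a·g)(x) = g(xa)`, `(f·b)(x) = f(bx)`. -/
def IsCocycle (α : A →ₗ[k] A →ₗ[k] Module.Dual k A) : Prop :=
  ∀ a b d x : A, α b d (x * a) - α (a * b) d x + α a (b * d) x - α a b (d * x) = 0

/-- The multiplication of the Hochschild extension `T(A,α)`:
`(a,f)(b,g) = (ab, a·g + f·b + α(a⊗b))`, where `(a·g)(x) = g(xa)` and `(f·b)(x) = f(bx)`. -/
noncomputable def hmul (α : A →ₗ[k] A →ₗ[k] Module.Dual k A) (p q : Ext k A) : Ext k A :=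
  (p.1 * q.1,
    q.2 ∘ₗ LinearMap.mulRight k p.1 + p.2 ∘ₗ LinearMap.mulLeft k q.1 + α p.1 q.1)

/-- The identity element `(1, -α(1⊗1))` of the Hochschild extension `T(A,α)`. -/
noncomputable def hone (α : A →ₗ[k] A →ₗ[k] Module.Dual k A) : Ext k A :=
  (1, -(α 1 1))

/-- `T(A,α)` is a symmetric algebra: there is a `k`-linear bijection
`φ : T(A,α) → T(A,α)*` which is a morphism of `T(A,α)`-bimodules, where `T(A,α)*`
carries the canonical bimodule structure `(t·ξ·s)(u) = ξ(sut)`. -/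
noncomputable def IsSymmetric (α : A →ₗ[k] A →ₗ[k] Module.Dual k A) : Prop :=
  ∃ φ : Ext k A ≃ₗ[k] Module.Dual k (Ext k A),
    ∀ x y u : Ext k A,
      φ (hmul k A α x y) u = φ x (hmul k A α y u) ∧
      φ (hmul k A α y x) u = φ x (hmul k A α u y)

/-- If the Hochschild extension `T(A,α)` is a symmetric algebra, then
there exist `c ∈ Z(A) ∩ U(A)` and `h ∈ A*` such that
`α(a⊗b)(c) − α(b⊗a)(c) + h(ab − ba) = 0` for all `a, b ∈ A`. -/
theorem symmetry_criterion_necessary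
    (k : Type*) [Field k] (A : Type*) [Ring A] [Algebra k A] [FiniteDimensional k A]
    (α : A →ₗ[k] A →ₗ[k] Module.Dual k A) (hα : IsCocycle k A α)
    (hsym : IsSymmetric k A α) :
    ∃ (c : A) (h : Module.Dual k A), (∀ b : A, b * c = c * b) ∧ IsUnit c ∧
      (∀ a b : A, α a b c - α b a c + h (a * b - b * a) = 0) := by
  obtain ⟨φ, hφ⟩ := hsym
  -- identity laws
  have hone_mul : ∀ p : Ext k A, hmul k A α (hone k A α) p = p := by
    intro p
    refine Prod.ext (one_mul p.1) ?_
    ext x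
    have hc := hα 1 1 p.1 x
    simp only [one_mul, mul_one] at hc
    simp only [hmul, hone, LinearMap.add_apply, LinearMap.coe_comp, Function.comp_apply,
      LinearMap.mulRight_apply, LinearMap.mulLeft_apply, LinearMap.neg_apply, mul_one]
    linear_combination hc
  have mul_hone : ∀ p : Ext k A, hmul k A α p (hone k A α) = p := by
    intro p
    refine Prod.ext (mul_one p.1) ?_
    ext x
    have hc := hα p.1 1 1 x
    simp only [one_mul, mul_one] at hc
    simp only [hmul, hone, LinearMap.add_apply, LinearMap.coe_comp, Function.comp_apply,
      LinearMap.mulRight_apply, LinearMap.mulLeft_apply, LinearMap.neg_apply, one_mul]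
    linear_combination -hc
  set Λ : Module.Dual k (Ext k A) := φ (hone k A α) with hΛ
  have key : ∀ x u : Ext k A, φ x u = Λ (hmul k A α x u) := by
    intro x u
    have := (hφ (hone k A α) x u).1
    rw [hone_mul x] at this
    exact this
  have key2 : ∀ x u : Ext k A, φ x u = Λ (hmul k A α u x) := by
    intro x u
    have := (hφ (hone k A α) x u).2
    rw [mul_hone x] at this
    exact this
  have trace : ∀ x u : Ext k A, Λ (hmul k A α x u) = Λ (hmul k A α u x) := fun x u =>
    (key x u).symm.trans (key2 x u)
  have inj : ∀ x : Ext k A, (∀ u, Λ (hmul k A α x u) = 0) → x = 0 := by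
    intro x hx
    have hx0 : φ x = 0 := LinearMap.ext fun u => by rw [key x u]; exact hx u
    exact φ.injective (by rw [hx0, map_zero])
  -- the center element c and the linear form h
  set θ : Module.Dual k (Module.Dual k A) := Λ ∘ₗ LinearMap.inr k A (Module.Dual k A) with hθ
  set c : A := (Module.evalEquiv k A).symm θ with hcdef
  have hc : ∀ F : Module.Dual k A, Λ (0, F) = F c := by
    intro F
    rw [hcdef, Module.apply_evalEquiv_symm_apply]
    rfl
  set h : Module.Dual k A := Λ ∘ₗ LinearMap.inl k A (Module.Dual k A) with hhdef
  have hh : ∀ a : A, Λ (a, 0) = h a := fun a => rfl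
  -- master computation
  have decomp : ∀ p : Ext k A, Λ p = h p.1 + p.2 c := by
    intro p
    have hp : p = ((p.1, 0) : Ext k A) + (0, p.2) := by simp
    rw [hp, map_add, hh, hc]
    simp
  have master : ∀ (a b : A) (f g : Module.Dual k A),
      Λ (hmul k A α (a, f) (b, g)) = h (a * b) + (g (c * a) + f (b * c) + α a b c) := by
    intro a b f g
    rw [decomp]
    simp only [hmul, LinearMap.add_apply, LinearMap.coe_comp, Function.comp_apply,
      LinearMap.mulRight_apply, LinearMap.mulLeft_apply]
  -- centrality
  have hcen : ∀ b : A, b * c = c * b := by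
    intro b
    rw [← sub_eq_zero, ← Module.forall_dual_apply_eq_zero_iff k (b * c - c * b)]
    intro f
    have := trace (b, 0) (0, f)
    rw [master, master] at this
    simp only [mul_zero, zero_mul, map_zero, LinearMap.zero_apply, map_sub] at this ⊢
    linear_combination -this
  -- unit
  have hunit : IsUnit c := by
    have hsurj : LinearMap.range (LinearMap.mulRight k c) = ⊤ := by
      by_contra hne
      obtain ⟨g, hg0, hgbot⟩ :=
        Submodule.exists_dual_map_eq_bot_of_lt_top (lt_top_iff_ne_top.mpr hne) inferInstance
      have : ((0, g) : Ext k A) = 0 := by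
        apply inj
        rintro ⟨a, f⟩
        rw [master]
        have hmem : a * c ∈ LinearMap.range (LinearMap.mulRight k c) :=
          ⟨a, rfl⟩
        have : g (a * c) = 0 := by
          have := hgbot ▸ Submodule.mem_map_of_mem (f := g) hmem
          simpa using this
        simp [this]
      exact hg0 (by simpa [Prod.ext_iff] using this)
    obtain ⟨b, hb⟩ := LinearMap.range_eq_top.mp hsurj 1
    rw [LinearMap.mulRight_apply] at hb
    exact ⟨⟨c, b, (hcen b) ▸ hb, hb⟩, rfl⟩
  -- final identity
  refine ⟨c, h, hcen, hunit, ?_⟩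
  intro a b
  have := trace (a, 0) (b, 0)
  rw [master, master] at this
  simp only [map_zero, LinearMap.zero_apply, map_sub] at this ⊢
  linear_combination this

end HochschildExtension
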